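/- arXiv:1804.09221 — 2 statements merged into one kernel-verified Lean document; each statement's English description precedes it below -/
import Mathlib

section
/- Let g, k be integers with k ≥ 3 and g ≤ k²/2, and consider the lattice Λ with Gram matrix [[2g−2, k, k],[k, 0, 2],[k, 2, 0]]. There is no element R = aC + b1E1 + b2E2 with integer coefficients satisfying: R² = −2, (R·E1) = −1, (R·E1+E2) ≥ 0, and (E1 − R · E1 + E2) ≥ 0. -/
open Matrix

/-- Let k ≥ 3 and g ≤ k²/2 (i.e. 2g ≤ k²).  In the lattice Λ with
Gram matrix [[2g−2,k,k],[k,0,2],[k,2,0]] there is no element R = aC + b1·E1 + b2·E2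
with R² = −2, (R·E1) = −1, (R·(E1+E2)) ≥ 0 and ((E1 − R)·(E1+E2)) ≥ 0. -/
theorem stmt_5 (g k : ℤ) (hk : 3 ≤ k) (hg : 2 * g ≤ k ^ 2) :
    letI G : Matrix (Fin 3) (Fin 3) ℤ := !![2*g - 2, k, k; k, 0, 2; k, 2, 0]
    ¬ ∃ a b1 b2 : ℤ,
        (![a, b1, b2] ⬝ᵥ G.mulVec ![a, b1, b2]) = -2 ∧
        (![a, b1, b2] ⬝ᵥ G.mulVec ![0, 1, 0]) = -1 ∧
        0 ≤ (![a, b1, b2] ⬝ᵥ G.mulVec (![0, 1, 0] + ![0, 0, 1])) ∧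
        0 ≤ ((![0, 1, 0] - ![a, b1, b2]) ⬝ᵥ G.mulVec (![0, 1, 0] + ![0, 0, 1])) := by
  rintro ⟨a, b1, b2, h1, h2, h3, h4⟩
  simp [Matrix.mulVec, dotProduct, Fin.sum_univ_three, Matrix.vecHead, Matrix.vecTail] at h1 h2 h3 h4
  have ha : a ≠ 0 := by rintro rfl; omega
  have ha2 : 1 ≤ a ^ 2 := by rcases lt_or_gt_of_ne ha with h|h <;> nlinarith
  have hak : (a * k) ^ 2 = (2 * b2 + 1) ^ 2 := by
    have : a * k = -1 - 2 * b2 := by linarith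
    rw [this]; ring
  have hb : a ^ 2 * (2 * g) ≤ a ^ 2 * k ^ 2 :=
    mul_le_mul_of_nonneg_left hg (sq_nonneg a)
  nlinarith [h1, h2, h3, h4, hak, hb, ha2, sq_nonneg a]
end

section
/- Let a ≤ −1 be an integer, let k, g be integers with k ≥ 1 and g ≥ 1, and set β = √(k² − 2g + 2) (assume k² − 2g + 2 ≥ 0). If there exist integers b1, b2 with a²(2g−2) + 2ak(b1+b2) + (b1+b2)² ≥ 0, (1−a)²(2g−2) − 2(1−a)k(b1+b2) + (b1+b2)² ≥ 0, and −ak ≤ b1 + b2 ≤ (1−a)k, then β ≤ k/(1−2a) ≤ k/3, and hence g ≥ 4k²/9 + 1. -/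
/-- Let a ≤ −1, k ≥ 1, g ≥ 1 be integers with k² − 2g + 2 ≥ 0 and
β = √(k² − 2g + 2).  If there exist integers b1, b2 with
a²(2g−2) + 2ak(b1+b2) + (b1+b2)² ≥ 0, (1−a)²(2g−2) − 2(1−a)k(b1+b2) + (b1+b2)² ≥ 0,
and −ak ≤ b1 + b2 ≤ (1−a)k, then β ≤ k/(1−2a) ≤ k/3 and hence g ≥ 4k²/9 + 1. -/
theorem stmt_7 (a k g : ℤ) (ha : a ≤ -1) (hk : 1 ≤ k) (hg : 1 ≤ g)
    (hpos : 0 ≤ k ^ 2 - 2 * g + 2)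
    (hex : ∃ b1 b2 : ℤ,
      0 ≤ a ^ 2 * (2 * g - 2) + 2 * a * k * (b1 + b2) + (b1 + b2) ^ 2 ∧
      0 ≤ (1 - a) ^ 2 * (2 * g - 2) - 2 * (1 - a) * k * (b1 + b2) + (b1 + b2) ^ 2 ∧
      -(a * k) ≤ b1 + b2 ∧ b1 + b2 ≤ (1 - a) * k) :
    Real.sqrt ((k : ℝ) ^ 2 - 2 * g + 2) ≤ (k : ℝ) / (1 - 2 * a) ∧
    (k : ℝ) / (1 - 2 * a) ≤ (k : ℝ) / 3 ∧
    (g : ℝ) ≥ 4 * (k : ℝ) ^ 2 / 9 + 1 := by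
  obtain ⟨b1, b2, h1, h2, h3, h4⟩ := hex
  set β : ℝ := Real.sqrt ((k : ℝ) ^ 2 - 2 * g + 2) with hβ
  have hposR : (0:ℝ) ≤ (k : ℝ) ^ 2 - 2 * g + 2 := by exact_mod_cast hpos
  have hβ0 : 0 ≤ β := Real.sqrt_nonneg _
  have hβsq : β ^ 2 = (k : ℝ) ^ 2 - 2 * g + 2 := Real.sq_sqrt hposR
  set t : ℝ := ((b1 : ℝ) + b2) with ht
  have haR : (a : ℝ) ≤ -1 := by exact_mod_cast ha
  have hkR : (1:ℝ) ≤ (k : ℝ) := by exact_mod_cast hk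
  have h1R : (0:ℝ) ≤ (a:ℝ) ^ 2 * (2 * g - 2) + 2 * a * k * t + t ^ 2 := by
    simp only [ht]; exact_mod_cast h1
  have h2R : (0:ℝ) ≤ (1 - (a:ℝ)) ^ 2 * (2 * g - 2) - 2 * (1 - a) * k * t + t ^ 2 := by
    simp only [ht]; exact_mod_cast h2
  have h3R : -((a:ℝ) * k) ≤ t := by simp only [ht]; exact_mod_cast h3
  have h4R : t ≤ (1 - (a:ℝ)) * k := by simp only [ht]; exact_mod_cast h4
  -- (t + a k)² ≥ a² β², t + a k ≥ 0, -a β ≥ 0  ⇒ t + a k ≥ -a β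
  have key1 : -(a:ℝ) * β ≤ t + a * k := by
    nlinarith [sq_nonneg (t + a * k + (-(a:ℝ)) * β), sq_nonneg β, hβsq,
      mul_nonneg (neg_nonneg.2 (by linarith : (a:ℝ) ≤ 0)) hβ0]
  have key2 : (1 - (a:ℝ)) * β ≤ (1 - a) * k - t := by
    nlinarith [sq_nonneg ((1 - (a:ℝ)) * k - t + (1 - a) * β), hβsq,
      mul_nonneg (by linarith : (0:ℝ) ≤ 1 - (a:ℝ)) hβ0]
  have hden : (0:ℝ) < 1 - 2 * a := by linarith
  have hmain : (1 - 2 * (a:ℝ)) * β ≤ k := by nlinarith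
  have c1 : β ≤ (k : ℝ) / (1 - 2 * a) := by
    rw [le_div_iff₀ hden]; linarith [hmain]
  refine ⟨c1, ?_, ?_⟩
  · apply div_le_div_of_nonneg_left (by linarith) (by norm_num) (by linarith)
  · have hb3 : β ≤ (k : ℝ) / 3 := by
      calc β ≤ (k : ℝ) / (1 - 2 * a) := c1
        _ ≤ (k : ℝ) / 3 := div_le_div_of_nonneg_left (by linarith) (by norm_num) (by linarith)
    nlinarith [hβsq, hβ0, hb3]
end
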